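/- Let A be a 6×6 additive-multiplicative magic square of distinct positive integers whose magic product P has the form P = p^s·q^4 for distinct primes p and q and a positive integer s. Then p = 2. -/

import Mathlib

/-!
Every entry divides `P`, so it is `p ^ a * q ^ b`, and the `q`-exponents along each row and
column add up to `4`. Let `k` be the least `p`-exponent and `T` the set of cells attaining it.
The entries are distinct, so the `q`-exponents on `T` are distinct elements of `{0, …, 4}`;
hence `#T ≤ 5` and some row misses `T`. Dividing the common line sum by `p ^ k` and reducing
mod `p` gives `p ∣ ∑_{x ∈ T ∩ L} q ^ b x` for every line `L`. As `p ∤ q`, no line meets `T` in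
exactly one cell, which forces `T` to be the four corners of a rectangle. Their exponents are
distinct with row and column pair sums at most `4`, so they are `0, 1, 2, 3`, with `2` sharing a
line with `0` and another with `1`. Thus `p ∣ q + q ^ 2` and `p ∣ 1 + q ^ 2`, whence
`p ∣ (1 + q ^ 2) - (q + 1) * (q - 1) = 2`.
-/

/-- `A` is an `n × n` additive-multiplicative magic square of pairwise distinct
positive integers, with magic sum `S` and magic product `P`: every row, every
column, and both long diagonals have sum `S` and product `P`. -/
def IsAddMulMagicSquare (n : ℕ) (A : Fin n → Fin n → ℕ) (S P : ℕ) : Prop :=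
  (∀ i j, 0 < A i j) ∧
  (Function.Injective fun c : Fin n × Fin n => A c.1 c.2) ∧
  (∀ i, ∑ j, A i j = S) ∧
  (∀ j, ∑ i, A i j = S) ∧
  (∑ i, A i i = S) ∧
  (∑ i, A i i.rev = S) ∧
  (∀ i, ∏ j, A i j = P) ∧
  (∀ j, ∏ i, A i j = P) ∧
  (∏ i, A i i = P) ∧
  (∏ i, A i i.rev = P)

open Finset

lemma exists_eq_pow_mul_pow_of_dvd {p q x s t : ℕ} (hp : p.Prime) (hq : q.Prime)
    (h : x ∣ p ^ s * q ^ t) : ∃ a b, x = p ^ a * q ^ b := by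
  obtain ⟨m, n, hm, hn, rfl⟩ := Nat.dvd_mul.mp h
  obtain ⟨a, -, rfl⟩ := (Nat.dvd_prime_pow hp).mp hm
  obtain ⟨b, -, rfl⟩ := (Nat.dvd_prime_pow hq).mp hn
  exact ⟨a, b, rfl⟩

lemma factorization_pow_mul_pow_right {p q : ℕ} (hp : p.Prime) (hq : q.Prime) (hpq : p ≠ q)
    (a b : ℕ) : (p ^ a * q ^ b).factorization q = b := by
  simp [Nat.factorization_mul (pow_ne_zero _ hp.ne_zero) (pow_ne_zero _ hq.ne_zero),
    hp.factorization_pow, hq.factorization_pow, hpq]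

lemma exists_sum_pow_mul_eq {ι : Type*} (p : ℕ) {k : ℕ} {s : Finset ι} {a c : ι → ℕ}
    (hk : ∀ x ∈ s, k ≤ a x) :
    ∃ m, ∑ x ∈ s, p ^ a x * c x = p ^ k * (∑ x ∈ s with a x = k, c x + p * m) := by
  refine ⟨∑ x ∈ s with a x ≠ k, p ^ (a x - k - 1) * c x, ?_⟩
  rw [mul_add, mul_sum, mul_sum, mul_sum, ← sum_filter_add_sum_filter_not s (fun x => a x = k)]
  congr 1
  · exact sum_congr rfl fun x hx => by rw [(mem_filter.mp hx).2]
  · refine sum_congr rfl fun x hx => ?_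
    have := hk x (mem_filter.mp hx).1
    have := (mem_filter.mp hx).2
    rw [← mul_assoc, ← mul_assoc, ← pow_succ, ← pow_add]
    congr 2
    omega

lemma dvd_sum_filter_eq_of_sum_eq {ι : Type*} {p k : ℕ} (hp : 0 < p) {s t : Finset ι}
    {a c : ι → ℕ} (hs : ∀ x ∈ s, k ≤ a x) (ht : ∀ x ∈ t, k < a x)
    (h : ∑ x ∈ s, p ^ a x * c x = ∑ x ∈ t, p ^ a x * c x) :
    p ∣ ∑ x ∈ s with a x = k, c x := by
  obtain ⟨m, hm⟩ := exists_sum_pow_mul_eq p hs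
  obtain ⟨m', hm'⟩ := exists_sum_pow_mul_eq p fun x hx => (ht x hx).le
  rw [filter_false_of_mem fun x hx => (ht x hx).ne', sum_empty, zero_add] at hm'
  rw [hm, hm', Nat.mul_left_cancel_iff (pow_pos hp k)] at h
  exact (Nat.dvd_add_left (dvd_mul_right p m)).mp (h ▸ dvd_mul_right p m')

lemma card_ne_one_of_dvd_sum_pow {ι : Type*} {p q : ℕ} (hp : p.Prime) (hpq : ¬p ∣ q)
    {s : Finset ι} {f : ι → ℕ} (h : p ∣ ∑ x ∈ s, q ^ f x) : #s ≠ 1 := by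
  intro hs
  obtain ⟨x, rfl⟩ := card_eq_one.mp hs
  rw [sum_singleton] at h
  exact hpq (hp.dvd_of_dvd_pow h)

lemma eq_two_of_dvd_add_sq {p q : ℕ} (hp : p.Prime) (hpq : ¬p ∣ q) (h₁ : p ∣ q + q ^ 2)
    (h₀ : p ∣ 1 + q ^ 2) : p = 2 := by
  have hq₁ : (p : ℤ) ∣ q + 1 := by
    rw [show q + q ^ 2 = q * (q + 1) by ring] at h₁
    exact_mod_cast (hp.dvd_mul.mp h₁).resolve_left hpq
  have h₂ : (p : ℤ) ∣ 2 := by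
    have := dvd_sub (Int.natCast_dvd_natCast.mpr h₀) (hq₁.mul_right (q - 1))
    rwa [show ((1 + q ^ 2 : ℕ) : ℤ) - (q + 1) * (q - 1) = 2 by push_cast; ring] at this
  exact (Nat.prime_dvd_prime_iff_eq hp Nat.prime_two).mp (by exact_mod_cast h₂)

lemma card_le_succ_of_injOn {ι : Type*} {s : Finset ι} {f : ι → ℕ} {t : ℕ}
    (hf : ∀ x ∈ s, f x ≤ t) (hinj : Set.InjOn f s) : #s ≤ t + 1 := by
  simpa using card_le_card_of_injOn f (t := range (t + 1))
    (fun x hx => mem_range.mpr (Nat.lt_succ_of_le (hf x hx))) hinj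

section Cells

variable {α β M : Type*}

@[to_additive]
lemma prod_filter_fst_eq [DecidableEq α] [Fintype α] [Fintype β] [CommMonoid M]
    (f : α × β → M) (i : α) : ∏ x with x.1 = i, f x = ∏ j, f (i, j) := by
  rw [← univ_product_univ, filter_product_left (· = i), filter_eq', if_pos (mem_univ i),
    prod_product, prod_singleton]

@[to_additive]
lemma prod_filter_snd_eq [DecidableEq β] [Fintype α] [Fintype β] [CommMonoid M]
    (f : α × β → M) (j : β) : ∏ x with x.2 = j, f x = ∏ i, f (i, j) := by
  rw [← univ_product_univ, filter_product_right (· = j), filter_eq', if_pos (mem_univ j),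
    prod_product_right, prod_singleton]

lemma sum_filter_fst_product [DecidableEq α] [AddCommMonoid M] (f : α × β → M) {s : Finset α}
    (t : Finset β) {i : α} (hi : i ∈ s) : ∑ x ∈ s ×ˢ t with x.1 = i, f x = ∑ j ∈ t, f (i, j) := by
  rw [filter_product_left (· = i), filter_eq', if_pos hi, sum_product, sum_singleton]

lemma sum_filter_snd_product [DecidableEq β] [AddCommMonoid M] (f : α × β → M) (s : Finset α)
    {t : Finset β} {j : β} (hj : j ∈ t) : ∑ x ∈ s ×ˢ t with x.2 = j, f x = ∑ i ∈ s, f (i, j) := by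
  rw [filter_product_right (· = j), filter_eq', if_pos hj, sum_product_right, sum_singleton]

lemma exists_forall_fst_ne_of_card_lt [Fintype α] {T : Finset (α × β)}
    (hT : #T < Fintype.card α) : ∃ i, ∀ x ∈ T, x.1 ≠ i := by
  classical
  obtain ⟨i, -, hi⟩ := exists_mem_notMem_of_card_lt_card (s := T.image Prod.fst) (t := univ)
    (card_image_le.trans_lt hT)
  exact ⟨i, fun x hx h => hi (mem_image.mpr ⟨x, hx, h⟩)⟩

end Cells

namespace IsAddMulMagicSquare

variable {n : ℕ} {A : Fin n → Fin n → ℕ} {S P : ℕ}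

lemma sum_row (hA : IsAddMulMagicSquare n A S P) (i : Fin n) :
    ∑ x : Fin n × Fin n with x.1 = i, A x.1 x.2 = S := by
  rw [sum_filter_fst_eq]
  exact hA.2.2.1 i

lemma sum_col (hA : IsAddMulMagicSquare n A S P) (j : Fin n) :
    ∑ x : Fin n × Fin n with x.2 = j, A x.1 x.2 = S := by
  rw [sum_filter_snd_eq]
  exact hA.2.2.2.1 j

lemma exists_exponents (hA : IsAddMulMagicSquare n A S P) {p q s t : ℕ} (hp : p.Prime)
    (hq : q.Prime) (hpq : p ≠ q) (hP : P = p ^ s * q ^ t) :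
    ∃ a b : Fin n × Fin n → ℕ, (∀ x, A x.1 x.2 = p ^ a x * q ^ b x) ∧
      (∀ i, ∑ x with x.1 = i, b x = t) ∧ (∀ j, ∑ x with x.2 = j, b x = t) := by
  obtain ⟨-, -, -, -, -, -, hrow, hcol, -, -⟩ := hA
  have hdvd (x : Fin n × Fin n) : A x.1 x.2 ∣ p ^ s * q ^ t :=
    hP ▸ hrow x.1 ▸ dvd_prod_of_mem _ (mem_univ x.2)
  choose a b hab using fun x => exists_eq_pow_mul_pow_of_dvd hp hq (hdvd x)
  have hline (L : Finset (Fin n × Fin n)) (hL : ∏ x ∈ L, A x.1 x.2 = P) : ∑ x ∈ L, b x = t := by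
    simp_rw [hab, prod_mul_distrib, prod_pow_eq_pow_sum, hP] at hL
    simpa only [factorization_pow_mul_pow_right hp hq hpq] using congrArg (·.factorization q) hL
  refine ⟨a, b, hab, fun i => hline _ ?_, fun j => hline _ ?_⟩
  · rw [prod_filter_fst_eq]
    exact hrow i
  · rw [prod_filter_snd_eq]
    exact hcol j

lemma dvd_sum_filter_layer (hA : IsAddMulMagicSquare n A S P) {p k : ℕ} (hp : 0 < p)
    {a c : Fin n × Fin n → ℕ} (hac : ∀ x, A x.1 x.2 = p ^ a x * c x) (hk : ∀ x, k ≤ a x)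
    {i₀ : Fin n} (hi₀ : ∀ x, x.1 = i₀ → a x ≠ k) (l : Fin n × Fin n → Prop) [DecidablePred l]
    (hl : ∑ x with l x, A x.1 x.2 = S) : p ∣ ∑ x ∈ {x | a x = k} with l x, c x := by
  rw [filter_comm]
  refine dvd_sum_filter_eq_of_sum_eq hp (t := {x | x.1 = i₀}) (fun x _ => hk x)
    (fun x hx => (hk x).lt_of_ne' (hi₀ x (mem_filter.mp hx).2)) ?_
  simp only [← hac, hl, hA.sum_row]

end IsAddMulMagicSquare

section Rectangle

variable {ι γ δ : Type*} [DecidableEq γ] [DecidableEq δ]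

lemma two_mul_card_image_le {f : ι → γ} {s : Finset ι} (h : ∀ c, #{x ∈ s | f x = c} ≠ 1) :
    2 * #(s.image f) ≤ #s := by
  rw [card_eq_sum_card_image f s, mul_comm, ← smul_eq_mul]
  refine card_nsmul_le_sum _ _ _ fun c hc => ?_
  obtain ⟨x, hx, rfl⟩ := mem_image.mp hc
  have : 0 < #{y ∈ s | f y = f x} := card_pos.mpr ⟨x, mem_filter.mpr ⟨hx, rfl⟩⟩
  have := h (f x)
  omega

lemma one_lt_card_image_of_card_fiber_ne_one {f : ι → γ} {g : ι → δ}
    (hfg : ∀ x y, f x = f y → g x = g y → x = y) {s : Finset ι} {x : ι} (hx : x ∈ s)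
    (h : #{y ∈ s | g y = g x} ≠ 1) : 1 < #(s.image f) := by
  have : 0 < #{y ∈ s | g y = g x} := card_pos.mpr ⟨x, mem_filter.mpr ⟨hx, rfl⟩⟩
  obtain ⟨y, hy, hyx⟩ := exists_mem_ne (s := {y ∈ s | g y = g x}) (by omega) x
  rw [mem_filter] at hy
  exact one_lt_card.mpr ⟨f y, mem_image_of_mem f hy.1, f x, mem_image_of_mem f hx,
    fun h => hyx (hfg y x h hy.2)⟩

theorem exists_eq_pair_product {T : Finset (γ × δ)} (hT : T.Nonempty) (hcard : #T ≤ 5)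
    (hrow : ∀ i, #{x ∈ T | x.1 = i} ≠ 1) (hcol : ∀ j, #{x ∈ T | x.2 = j} ≠ 1) :
    ∃ i i' j j', i ≠ i' ∧ j ≠ j' ∧ T = ({i, i'} : Finset γ) ×ˢ ({j, j'} : Finset δ) := by
  obtain ⟨x, hx⟩ := hT
  have hR := two_mul_card_image_le hrow
  have hC := two_mul_card_image_le hcol
  have hR' := one_lt_card_image_of_card_fiber_ne_one (fun x y h h' => Prod.ext h h') hx
    (hcol x.2)
  have hC' := one_lt_card_image_of_card_fiber_ne_one (fun x y h h' => Prod.ext h' h) hx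
    (hrow x.1)
  have hR2 : #(T.image Prod.fst) = 2 := by omega
  have hC2 : #(T.image Prod.snd) = 2 := by omega
  have hT : T = T.image Prod.fst ×ˢ T.image Prod.snd :=
    eq_of_subset_of_card_le subset_product (by rw [card_product, hR2, hC2]; omega)
  obtain ⟨i, i', hi, hR⟩ := card_eq_two.mp hR2
  obtain ⟨j, j', hj, hC⟩ := card_eq_two.mp hC2
  exact ⟨i, i', j, j', hi, hj, hR ▸ hC ▸ hT⟩

lemma rel_one_two_and_zero_two {r : ℕ → ℕ → Prop} (hr : ∀ u v, r u v → r v u)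
    (hsum : ∀ u v, r u v → u + v ≤ 4) {x y z w : ℕ} (hxy : x ≠ y) (hxz : x ≠ z) (hxw : x ≠ w)
    (hyz : y ≠ z) (hyw : y ≠ w) (hzw : z ≠ w) (rxy : r x y) (rzw : r z w) (rxz : r x z)
    (ryw : r y w) : r 1 2 ∧ r 0 2 := by
  have := hsum _ _ rxy; have := hsum _ _ rzw; have := hsum _ _ rxz; have := hsum _ _ ryw
  -- Four distinct values with these pair sums are `0, 1, 2, 3`, with `3` opposite `2`.
  rcases (by omega : x = 3 ∨ y = 3 ∨ z = 3 ∨ w = 3) with rfl | rfl | rfl | rfl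
  · obtain rfl : w = 2 := by omega
    obtain ⟨rfl, rfl⟩ | ⟨rfl, rfl⟩ : y = 0 ∧ z = 1 ∨ y = 1 ∧ z = 0 := by omega
    exacts [⟨rzw, ryw⟩, ⟨ryw, rzw⟩]
  · obtain rfl : z = 2 := by omega
    obtain ⟨rfl, rfl⟩ | ⟨rfl, rfl⟩ : x = 0 ∧ w = 1 ∨ x = 1 ∧ w = 0 := by omega
    exacts [⟨hr _ _ rzw, rxz⟩, ⟨rxz, hr _ _ rzw⟩]
  · obtain rfl : y = 2 := by omega
    obtain ⟨rfl, rfl⟩ | ⟨rfl, rfl⟩ : x = 0 ∧ w = 1 ∨ x = 1 ∧ w = 0 := by omega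
    exacts [⟨hr _ _ ryw, rxy⟩, ⟨rxy, hr _ _ ryw⟩]
  · obtain rfl : x = 2 := by omega
    obtain ⟨rfl, rfl⟩ | ⟨rfl, rfl⟩ : y = 0 ∧ z = 1 ∨ y = 1 ∧ z = 0 := by omega
    exacts [⟨hr _ _ rxz, hr _ _ rxy⟩, ⟨hr _ _ rxy, hr _ _ rxz⟩]

lemma rel_one_two_and_zero_two_of_pair_product {r : ℕ → ℕ → Prop} (hr : ∀ u v, r u v → r v u)
    (hsum : ∀ u v, r u v → u + v ≤ 4) {v : γ × δ → ℕ} {i i' : γ} {j j' : δ} (hi : i ≠ i')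
    (hj : j ≠ j') (hv : Set.InjOn v ↑(({i, i'} : Finset γ) ×ˢ ({j, j'} : Finset δ)))
    (hrow : ∀ i₁ ∈ ({i, i'} : Finset γ), r (v (i₁, j)) (v (i₁, j')))
    (hcol : ∀ j₁ ∈ ({j, j'} : Finset δ), r (v (i, j₁)) (v (i', j₁))) : r 1 2 ∧ r 0 2 :=
  rel_one_two_and_zero_two hr hsum (hv.ne (by simp) (by simp) (by simp [hj]))
    (hv.ne (by simp) (by simp) (by simp [hi])) (hv.ne (by simp) (by simp) (by simp [hi]))
    (hv.ne (by simp) (by simp) (by simp [hi])) (hv.ne (by simp) (by simp) (by simp [hi]))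
    (hv.ne (by simp) (by simp) (by simp [hj])) (hrow i (by simp)) (hrow i' (by simp))
    (hcol j (by simp)) (hcol j' (by simp))

end Rectangle

theorem six_square_product_p_pow_q_four_forces_two_general
    (A : Fin 6 → Fin 6 → ℕ) (S P : ℕ)
    (hA : IsAddMulMagicSquare 6 A S P)
    (p q s : ℕ) (hp : p.Prime) (hq : q.Prime) (hpq : p ≠ q)
    (hP : P = p ^ s * q ^ 4) :
    p = 2 := by
  have hndvd : ¬p ∣ q := fun h => hpq ((Nat.prime_dvd_prime_iff_eq hp hq).mp h)
  obtain ⟨a, b, hab, hrowb, hcolb⟩ := hA.exists_exponents hp hq hpq hP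
  obtain ⟨x₀, hx₀⟩ := Finite.exists_min a
  set T : Finset (Fin 6 × Fin 6) := {x | a x = a x₀} with hT
  have hbT : Set.InjOn b T := fun x hx y hy hxy => hA.2.1 <| by
    simp only [hT, coe_filter, mem_univ, true_and, Set.mem_ofPred_eq] at hx hy
    simp only [hab, hx, hy, hxy]
  have hb (x : Fin 6 × Fin 6) : b x ≤ 4 :=
    (single_le_sum (s := {y | y.1 = x.1}) (fun _ _ => Nat.zero_le _) (by simp)).trans_eq
      (hrowb x.1)
  have hTcard : #T ≤ 5 := card_le_succ_of_injOn (fun x _ => hb x) hbT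
  obtain ⟨i₀, hi₀⟩ := exists_forall_fst_ne_of_card_lt (T := T) (by simp; omega)
  have hdvd := hA.dvd_sum_filter_layer hp.pos hab hx₀ (i₀ := i₀)
    fun x hx h => hi₀ x (by simp [hT, h]) hx
  have hrow (i : Fin 6) : ∑ x ∈ T with x.1 = i, b x ≤ 4 ∧ p ∣ ∑ x ∈ T with x.1 = i, q ^ b x :=
    ⟨(sum_le_sum_of_subset (filter_subset_filter _ (subset_univ _))).trans_eq (hrowb i),
      hdvd _ (hA.sum_row i)⟩
  have hcol (j : Fin 6) : ∑ x ∈ T with x.2 = j, b x ≤ 4 ∧ p ∣ ∑ x ∈ T with x.2 = j, q ^ b x :=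
    ⟨(sum_le_sum_of_subset (filter_subset_filter _ (subset_univ _))).trans_eq (hcolb j),
      hdvd _ (hA.sum_col j)⟩
  obtain ⟨i, i', j, j', hi, hj, hTeq⟩ := exists_eq_pair_product ⟨x₀, by simp [hT]⟩ hTcard
    (fun i => card_ne_one_of_dvd_sum_pow hp hndvd (hrow i).2)
    (fun j => card_ne_one_of_dvd_sum_pow hp hndvd (hcol j).2)
  rw [hTeq] at hbT hrow hcol
  obtain ⟨h₁, h₀⟩ := rel_one_two_and_zero_two_of_pair_product
    (r := fun u v => u + v ≤ 4 ∧ p ∣ q ^ u + q ^ v)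
    (fun u v h => ⟨by omega, by rw [add_comm]; exact h.2⟩) (fun u v h => h.1) hi hj hbT
    (fun i₁ hi₁ => by simpa only [sum_filter_fst_product _ _ hi₁, sum_pair hj] using hrow i₁)
    (fun j₁ hj₁ => by simpa only [sum_filter_snd_product _ _ hj₁, sum_pair hi] using hcol j₁)
  exact eq_two_of_dvd_add_sq hp hndvd (by simpa using h₁.2) (by simpa using h₀.2)

/-- If a 6×6 additive-multiplicative magic square of distinct positive integers
has magic product `P = p^s * q^4` with `p ≠ q` primes and `s ≥ 1`, then
`p = 2`. -/
theorem six_square_product_p_pow_q_four_forces_two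
    (A : Fin 6 → Fin 6 → ℕ) (S P : ℕ)
    (hA : IsAddMulMagicSquare 6 A S P)
    (p q s : ℕ) (hp : p.Prime) (hq : q.Prime) (hpq : p ≠ q) (hs : 1 ≤ s)
    (hP : P = p ^ s * q ^ 4) :
    p = 2 :=
  six_square_product_p_pow_q_four_forces_two_general A S P hA p q s hp hq hpq hP
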